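/- arXiv:2008.04841 — 4 statements merged into one kernel-verified Lean document; each statement's English description precedes it below -/
import Mathlib

section
/- Main lacunary recurrence for Lucas numbers: for integers N ≥ 2 and n with n ≥ 2N, letting d = ⌊⌊n/N⌋/2⌋, we have L_n = L_N * Σ_{i=1}^{d} (-1)^{(N+1)(i+1)} L_{n-(2i-1)N} + (-1)^{(N+1)(d+2)} L_{n-2dN}. -/
def lucas : ℕ → ℕ
  | 0 => 2
  | 1 => 1
  | n + 2 => lucas (n + 1) + lucas n

/-!
The identity `L (a + 2b) = L b * L (a + b) + (-1)^(b+1) * L a` with `b = N` rewrites the remainder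
`L (n - 2dN)` as `L N * L (n - (2d+1)N) + (-1)^(N+1) * L (n - 2(d+1)N)`; iterating it peels off
one summand per step. The expansion holds for every `d` with `2dN ≤ n` (for `d = 0` it is trivial
since `((-1)^(N+1))^2 = 1`), in particular for `d = ⌊⌊n/N⌋/2⌋`.
-/

open Finset

theorem lucas_add_two_int (n : ℕ) : (lucas (n + 2) : ℤ) = lucas (n + 1) + lucas n := by
  rw [lucas, Nat.cast_add]

theorem lucas_add_two_mul : ∀ a b : ℕ,
    (lucas (a + 2 * b) : ℤ) = lucas b * lucas (a + b) + (-1) ^ (b + 1) * lucas a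
  | a, 0 => by rw [mul_zero, add_zero, zero_add, pow_one, lucas]; ring
  | a, 1 => by rw [lucas_add_two_int a]; simp only [lucas]; ring
  | a, b + 2 => by
    have h₁ := lucas_add_two_mul (a + 1) (b + 1)
    have h₂ := lucas_add_two_mul (a + 2) b
    rw [show a + 1 + 2 * (b + 1) = a + 2 * b + 1 + 2 by ring,
      show a + 1 + (b + 1) = a + b + 2 by ring] at h₁
    rw [show a + 2 + 2 * b = a + 2 * b + 2 by ring, show a + 2 + b = a + b + 2 by ring] at h₂
    rw [show a + 2 * (b + 2) = a + 2 * b + 2 + 2 by ring, lucas_add_two_int,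
      show a + 2 * b + 2 + 1 = a + 2 * b + 1 + 2 by ring, h₁, h₂,
      show a + (b + 2) = a + b + 2 by ring, lucas_add_two_int b, lucas_add_two_int a]
    ring

theorem lucas_eq_sum_add (N : ℕ) : ∀ d n : ℕ, 2 * d * N ≤ n →
    (lucas n : ℤ) =
      lucas N * ∑ i ∈ Icc 1 d, (-1 : ℤ) ^ ((N + 1) * (i + 1)) * lucas (n - (2 * i - 1) * N) +
        (-1 : ℤ) ^ ((N + 1) * (d + 2)) * lucas (n - 2 * d * N)
  | 0, n, _ => by
    simp [Even.neg_one_pow (⟨N + 1, by ring⟩ : Even ((N + 1) * 2))]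
  | d + 1, n, hn => by
    obtain ⟨m, rfl⟩ := Nat.exists_eq_add_of_le' hn
    have h2 : 2 * (d + 1) - 1 = 2 * d + 1 := by omega
    rw [lucas_eq_sum_add N d _ (by nlinarith), sum_Icc_succ_top (by omega), h2, Nat.add_sub_cancel,
      Nat.sub_eq_of_eq_add (by ring : m + 2 * (d + 1) * N = m + 2 * N + 2 * d * N),
      Nat.sub_eq_of_eq_add (by ring : m + 2 * (d + 1) * N = m + N + (2 * d + 1) * N),
      lucas_add_two_mul]
    ring

theorem lucas_lacunary_general (N n : ℕ) :
    (lucas n : ℤ) =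
      (lucas N : ℤ) *
          ∑ i ∈ Finset.Icc 1 (n / N / 2),
            (-1 : ℤ) ^ ((N + 1) * (i + 1)) * lucas (n - (2 * i - 1) * N) +
        (-1 : ℤ) ^ ((N + 1) * (n / N / 2 + 2)) * lucas (n - 2 * (n / N / 2) * N) :=
  lucas_eq_sum_add N _ n <|
    calc 2 * (n / N / 2) * N ≤ n / N * N := Nat.mul_le_mul_right N (Nat.mul_div_le _ 2)
      _ ≤ n := Nat.div_mul_le_self n N

theorem lucas_lacunary (N n : ℕ) (hN : 2 ≤ N) (hn : 2 * N ≤ n) :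
    (lucas n : ℤ) =
      (lucas N : ℤ) *
          ∑ i ∈ Finset.Icc 1 (n / N / 2),
            (-1 : ℤ) ^ ((N + 1) * (i + 1)) * lucas (n - (2 * i - 1) * N) +
        (-1 : ℤ) ^ ((N + 1) * (n / N / 2 + 2)) * lucas (n - 2 * (n / N / 2) * N) :=
  lucas_lacunary_general N n
end

section
/- Congruence for Lucas numbers: for integers N ≥ 2 and n with n ≥ 2N, letting d = ⌊⌊n/N⌋/2⌋, we have L_n ≡ (-1)^{(N+1)(d+2)} L_{n-2dN} (mod L_N). -/
/-!
Binet's formula `L_n = φ^n + ψ^n` together with `φψ = -1` gives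
`L_N L_{m+N} = L_{m+2N} + (-1)^N L_m`, so `L_{m+2N} ≡ (-1)^(N+1) L_m (mod L_N)`.
Applying this `d` times moves `n - 2dN` up to `n`, and the extra factor
`(-1)^(2(N+1)) = 1` in the exponent is harmless.
-/

open Real goldenRatio

theorem coe_lucas_eq (n : ℕ) : (lucas n : ℝ) = φ ^ n + ψ ^ n := by
  induction n using Nat.twoStepInduction with
  | zero => norm_num [lucas]
  | one => simp [lucas, goldenRatio_add_goldenConj]
  | more n ih₀ ih₁ =>
    rw [lucas, Nat.cast_add, ih₀, ih₁, pow_add φ n 2, pow_add ψ n 2, goldenRatio_sq,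
      goldenConj_sq]
    ring

theorem lucas_mul_lucas_add (k m : ℕ) :
    (lucas k * lucas (m + k) : ℤ) = lucas (m + 2 * k) + (-1) ^ k * lucas m := by
  have h : (lucas k * lucas (m + k) : ℝ) = lucas (m + 2 * k) + (-1) ^ k * lucas m := by
    simp only [coe_lucas_eq, ← goldenRatio_mul_goldenConj]
    generalize φ = a, ψ = b -- otherwise `ring` unfolds `φ` and `ψ` into `√5`
    ring
  exact_mod_cast h

theorem lucas_add_two_mul_modEq (k m : ℕ) :
    (lucas (m + 2 * k) : ℤ) ≡ (-1) ^ (k + 1) * lucas m [ZMOD lucas k] := by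
  refine (Int.modEq_iff_dvd.mpr ⟨lucas (m + k), ?_⟩).symm
  linear_combination (lucas_mul_lucas_add k m).symm

theorem lucas_add_two_mul_mul_modEq (k d m : ℕ) :
    (lucas (m + 2 * d * k) : ℤ) ≡ (-1) ^ ((k + 1) * d) * lucas m [ZMOD lucas k] := by
  induction d with
  | zero => simp [Int.ModEq]
  | succ d ih =>
    have step := lucas_add_two_mul_modEq k (m + 2 * d * k)
    rw [show m + 2 * (d + 1) * k = m + 2 * d * k + 2 * k by ring]
    calc (lucas (m + 2 * d * k + 2 * k) : ℤ)
        ≡ (-1) ^ (k + 1) * ((-1) ^ ((k + 1) * d) * lucas m) [ZMOD lucas k] :=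
          step.trans (ih.mul_left _)
      _ = (-1) ^ ((k + 1) * (d + 1)) * lucas m := by ring

theorem lucas_congruence_general (N n : ℕ) :
    (lucas n : ℤ) ≡ (-1 : ℤ) ^ ((N + 1) * (n / N / 2 + 2)) * lucas (n - 2 * (n / N / 2) * N)
      [ZMOD (lucas N : ℤ)] := by
  set d := n / N / 2
  have hle : 2 * d * N ≤ n :=
    calc 2 * d * N = n / N / 2 * 2 * N := by ring
      _ ≤ n / N * N := Nat.mul_le_mul_right N (Nat.div_mul_le_self _ 2)
      _ ≤ n := Nat.div_mul_le_self n N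
  have h := lucas_add_two_mul_mul_modEq N d (n - 2 * d * N)
  rw [Nat.sub_add_cancel hle] at h
  have hsign : (-1 : ℤ) ^ ((N + 1) * (d + 2)) = (-1) ^ ((N + 1) * d) := by
    rw [mul_add, pow_add, mul_comm (N + 1) 2, pow_mul]
    norm_num
  rwa [hsign]

theorem lucas_congruence (N n : ℕ) (hN : 2 ≤ N) (hn : 2 * N ≤ n) :
    (lucas n : ℤ) ≡ (-1 : ℤ) ^ ((N + 1) * (n / N / 2 + 2)) * lucas (n - 2 * (n / N / 2) * N)
      [ZMOD (lucas N : ℤ)] :=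
  lucas_congruence_general N n
end

section
/- For integers n, N with n ≥ 2N + 2 and N ≥ 3: f_{N-3} f_{n-N-1} + f_{n-2} - f_{N-2} f_{n-N-2} - f_N f_{n-N-2} - f_{N-2} f_{n-N-2} = (-1)^{N+1} L_{n-2N}, where f_k = F_{k+1} and L is the Lucas sequence. -/
theorem lucas_add_fib : ∀ k, lucas k + Nat.fib k = 2 * Nat.fib (k + 1)
  | 0 => rfl
  | 1 => rfl
  | k + 2 => by
    have h₀ := lucas_add_fib k
    have h₁ : lucas (k + 1) + Nat.fib (k + 1) = 2 * Nat.fib (k + 2) := lucas_add_fib (k + 1)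
    have f₂ : Nat.fib (k + 2) = Nat.fib k + Nat.fib (k + 1) := Nat.fib_add_two
    have f₃ : Nat.fib (k + 3) = Nat.fib (k + 1) + Nat.fib (k + 2) := Nat.fib_add_two
    show lucas (k + 1) + lucas k + Nat.fib (k + 2) = 2 * Nat.fib (k + 3)
    omega

theorem lucas_succ (m : ℕ) : lucas (m + 1) = Nat.fib m + Nat.fib (m + 2) := by
  have h : lucas (m + 1) + Nat.fib (m + 1) = 2 * Nat.fib (m + 2) := lucas_add_fib (m + 1)
  have f : Nat.fib (m + 2) = Nat.fib m + Nat.fib (m + 1) := Nat.fib_add_two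
  omega

theorem fib_mul_lucas_sub_fib_mul_lucas_succ (k : ℕ) : ∀ p,
    (Nat.fib (k + p + 1) : ℤ) * lucas p - Nat.fib (k + p) * lucas (p + 1) = (-1) ^ p * lucas k
  | 0 => by
    have h : (lucas k : ℤ) + Nat.fib k = 2 * Nat.fib (k + 1) := mod_cast lucas_add_fib k
    simp only [add_zero, lucas, pow_zero, Nat.cast_ofNat, Nat.cast_one]
    linear_combination -h
  | p + 1 => by
    have ih := fib_mul_lucas_sub_fib_mul_lucas_succ k p
    have hF : (Nat.fib (k + p + 2) : ℤ) = Nat.fib (k + p) + Nat.fib (k + p + 1) :=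
      mod_cast Nat.fib_add_two
    have hL : (lucas (p + 2) : ℤ) = lucas (p + 1) + lucas p := mod_cast rfl
    show (Nat.fib (k + p + 2) : ℤ) * lucas (p + 1) - Nat.fib (k + p + 1) * lucas (p + 2) = _
    rw [hF, hL, pow_succ]
    linear_combination -ih

theorem difference_identity (n N : ℕ) (hN : 3 ≤ N) (hn : 2 * N + 2 ≤ n) :
    (Nat.fib (N - 2) : ℤ) * Nat.fib (n - N) + (Nat.fib (n - 1) : ℤ) -
        (Nat.fib (N - 1) : ℤ) * Nat.fib (n - N - 1) -
        (Nat.fib (N + 1) : ℤ) * Nat.fib (n - N - 1) -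
        (Nat.fib (N - 1) : ℤ) * Nat.fib (n - N - 1) =
      (-1 : ℤ) ^ (N + 1) * lucas (n - 2 * N) := by
  obtain ⟨m, rfl⟩ : ∃ m, N = m + 2 := ⟨N - 2, by omega⟩
  obtain ⟨k, rfl⟩ : ∃ k, n = 2 * m + k + 4 := ⟨n - 2 * (m + 2), by omega⟩
  rw [show m + 2 - 2 = m by omega, show m + 2 - 1 = m + 1 by omega,
    show 2 * m + k + 4 - (m + 2) = k + m + 2 by omega, show k + m + 2 - 1 = k + m + 1 by omega,
    show 2 * m + k + 4 - 1 = m + 1 + (k + m + 1) + 1 by omega,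
    show 2 * m + k + 4 - 2 * (m + 2) = k by omega]
  have hsum : (Nat.fib (m + 1 + (k + m + 1) + 1) : ℤ) =
      Nat.fib (m + 1) * Nat.fib (k + m + 1) + Nat.fib (m + 2) * Nat.fib (k + m + 2) :=
    mod_cast Nat.fib_add _ _
  have hL₁ : (lucas (m + 1) : ℤ) = Nat.fib m + Nat.fib (m + 2) := mod_cast lucas_succ m
  have hL₂ : (lucas (m + 2) : ℤ) = Nat.fib (m + 1) + Nat.fib (m + 3) := mod_cast lucas_succ _
  linear_combination hsum + fib_mul_lucas_sub_fib_mul_lucas_succ k (m + 1) -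
    Nat.fib (k + m + 2) * hL₁ + Nat.fib (k + m + 1) * hL₂
end

section
/- Gibonacci version of the one-step identity: let G_0, G_1 be arbitrary integers and G_n = G_{n-1} + G_{n-2}. Then for n ≥ 2N ≥ 0, G_n = L_N * G_{n-N} + (-1)^{N+1} * G_{n-2N}, where L is the Lucas sequence. -/
theorem lucas_add_two (n : ℕ) : lucas (n + 2) = lucas (n + 1) + lucas n := rfl

theorem gibonacci_add_two_mul {R : Type*} [CommRing R] (G : ℕ → R)
    (hG : ∀ n, G (n + 2) = G (n + 1) + G n) (N m : ℕ) :
    G (m + 2 * N) = lucas N * G (m + N) + (-1) ^ (N + 1) * G m := by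
  induction N using Nat.twoStepInduction generalizing m with
  | zero => simp [lucas]; ring
  | one => simpa [lucas, add_comm] using hG m
  | more N ih₀ ih₁ =>
    -- All three identities are centred at `m + N + 2`; the recurrence at the two outer ends
    -- turns `L (N + 1) + L N` times the centre into the identity for `N + 2`.
    have h₀ := ih₀ (m + 2)
    have h₁ := ih₁ (m + 1)
    have hm := hG m
    have hM := hG (m + 2 * N + 2)
    push_cast [lucas_add_two]
    ring_nf at h₀ h₁ hm hM ⊢
    linear_combination hM + h₀ + h₁ - (-1) ^ N * hm

theorem gibonacci_one_step (G : ℕ → ℤ) (hG : ∀ n, G (n + 2) = G (n + 1) + G n)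
    (n N : ℕ) (h : 2 * N ≤ n) :
    G n = (lucas N : ℤ) * G (n - N) + (-1 : ℤ) ^ (N + 1) * G (n - 2 * N) := by
  obtain ⟨m, rfl⟩ := Nat.exists_eq_add_of_le' h
  rw [show m + 2 * N - N = m + N by omega, Nat.add_sub_cancel]
  exact gibonacci_add_two_mul G hG N m
end
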